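/- arXiv:2211.06209 — 2 statements merged into one kernel-verified Lean document; each statement's English description precedes it below -/
import Mathlib

section
/- Let b be strictly concave with b' > 0 and c strictly convex, both differentiable. Let A^o be the globally optimal aggregate abatement, satisfying P·b'(A^o) = c'(A^o/P). In the 'mixed-motives' outcome, a_1 satisfies P·b'(A) = c'(a_1) and a_j satisfies P_j·b'(A) = c'(a_j) for j ≥ 2, with A = Σ_j P_j a_j. If P_j < P for some j ≥ 2 (strict inequality of populations), then A < A^o, and consequently the globally-oriented country's carbon price τ_1 = P·b'(A) exceeds the globally optimal uniform price τ^o = P·b'(A^o). -/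
/-! If `A⁰ ≤ A`, then `b'(A) ≤ b'(A⁰)`, so every country prices carbon at most at `τ⁰`, and one of
them (a country `j ≠ i₀` with `Pⱼ < P`) strictly below it. Since `c'` is strictly increasing,
every `aⱼ` is then at most the optimal per-capita abatement `A⁰/P`, one strictly, and the
population-weighted sum gives `A < A⁰`, a contradiction. Hence `A < A⁰`, and `τ₁ > τ⁰` because
`b'` is strictly decreasing. -/

theorem Finset.sum_mul_lt_sum_mul_of_le_of_exists_lt {ι : Type*} [Fintype ι] {w x : ι → ℝ}
    {c : ℝ} (hw : ∀ j, 0 < w j) (hle : ∀ j, x j ≤ c) (hlt : ∃ j, x j < c) :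
    ∑ j, w j * x j < (∑ j, w j) * c := by
  obtain ⟨j, hj⟩ := hlt
  rw [Finset.sum_mul]
  exact Finset.sum_lt_sum (fun k _ => mul_le_mul_of_nonneg_left (hle k) (hw k).le)
    ⟨j, Finset.mem_univ j, mul_lt_mul_of_pos_left hj (hw j)⟩

/-- Mixed motives: if country `0` uses weight `P` (global) while each other
country `j` uses its own weight `Pⱼ < P`, then aggregate abatement falls short
of the global optimum `A⁰`, and the globally-oriented country's price
`τ₁ = P·b'(A)` exceeds the globally optimal price `τ⁰ = P·b'(A⁰)`. -/
theorem stmt_3 (n : ℕ) (P : Fin n → ℝ) (Db Dc : ℝ → ℝ)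
    (hP : ∀ j, 0 < P j)
    (hDb : StrictAnti Db) (hDbpos : ∀ x, 0 < Db x) (hDc : StrictMono Dc)
    (Ptot : ℝ) (hPtot : Ptot = ∑ j, P j)
    (Ao : ℝ) (hAo : Ptot * Db Ao = Dc (Ao / Ptot))
    (a : Fin n → ℝ) (A : ℝ) (hA : A = ∑ j, P j * a j)
    (i0 : Fin n) (h1 : Ptot * Db A = Dc (a i0))
    (hj : ∀ j : Fin n, j ≠ i0 → P j * Db A = Dc (a j))
    (hstrict : ∃ j : Fin n, j ≠ i0 ∧ P j < Ptot) :
    A < Ao ∧ Ptot * Db A > Ptot * Db Ao := by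
  have hPtot_pos : 0 < Ptot := hPtot ▸ Finset.sum_pos (fun j _ => hP j) ⟨i0, Finset.mem_univ i0⟩
  have hP_le : ∀ j, P j ≤ Ptot := fun j =>
    hPtot ▸ Finset.single_le_sum (fun k _ => (hP k).le) (Finset.mem_univ j)
  have hA_lt : A < Ao := by
    by_contra! hAo_le
    have hτ : Ptot * Db A ≤ Dc (Ao / Ptot) :=
      hAo ▸ mul_le_mul_of_nonneg_left (hDb.antitone hAo_le) hPtot_pos.le
    have hle : ∀ j, a j ≤ Ao / Ptot := by
      intro j
      by_cases hji : j = i0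
      · exact hji ▸ hDc.le_iff_le.mp (h1 ▸ hτ)
      · exact hDc.le_iff_le.mp <| hj j hji ▸
          (mul_le_mul_of_nonneg_right (hP_le j) (hDbpos A).le).trans hτ
    have hlt : ∃ j, a j < Ao / Ptot := by
      obtain ⟨j, hji, hPj⟩ := hstrict
      exact ⟨j, hDc.lt_iff_lt.mp <| hj j hji ▸
        (mul_lt_mul_of_pos_right hPj (hDbpos A)).trans_le hτ⟩
    have hsum := Finset.sum_mul_lt_sum_mul_of_le_of_exists_lt hP hle hlt
    rw [← hA, ← hPtot, mul_div_cancel₀ Ao hPtot_pos.ne'] at hsum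
    exact hsum.not_ge hAo_le
  exact ⟨hA_lt, mul_lt_mul_of_pos_left (hDb hA_lt) hPtot_pos⟩
end

section
/- In the linear-quadratic coalition game with P_1 > P_2 > ... > P_N > 0, if 2P_2 < P_1 then the two-country coalition {1, j} fails internal stability for every j ≥ 2 (country j wants to leave), while any coalition of two countries both different from 1 fails external stability (country 1 wants to join). Hence the only stable outcome is the singleton coalition {1}. -/
lemma Fin.mk_one_le_of_ne_mk_zero {n : ℕ} (h1 : 1 < n) {j : Fin n}
    (hj : j ≠ ⟨0, Nat.zero_lt_of_lt h1⟩) : ⟨1, h1⟩ ≤ j :=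
  Fin.mk_le_of_le_val (Nat.one_le_iff_ne_zero.mpr fun h => hj (Fin.ext h))

lemma Fin.mk_zero_lt_of_ne {n : ℕ} (h1 : 1 < n) {j : Fin n}
    (hj : j ≠ ⟨0, Nat.zero_lt_of_lt h1⟩) : ⟨0, Nat.zero_lt_of_lt h1⟩ < j :=
  lt_of_lt_of_le (Fin.mk_lt_mk.mpr Nat.zero_lt_one) (Fin.mk_one_le_of_ne_mk_zero h1 hj)

/-- If `2P₂ < P₁` (indices 0-based: `2·P 1 < P 0`), then every two-country
coalition `{1, j}` fails internal stability (member `j` wants to leave), and any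
two-country coalition not containing country 1 fails external stability
(country 1 wants to join); hence only the singleton `{1}` is stable. -/
theorem stmt_9 (n : ℕ) (hn : 2 ≤ n) (P : Fin n → ℝ)
    (hanti : StrictAnti P)
    (h : 2 * P ⟨1, by omega⟩ < P ⟨0, by omega⟩) :
    (∀ j : Fin n, j ≠ ⟨0, by omega⟩ → 2 * P j < P ⟨0, by omega⟩)
    ∧ (∀ j k : Fin n, j ≠ ⟨0, by omega⟩ → k ≠ ⟨0, by omega⟩ → j ≠ k →
        2 * P ⟨0, by omega⟩ > P j + P k) := by
  refine ⟨fun j hj => ?_, fun j k hj hk _ => ?_⟩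
  · have := hanti.antitone (Fin.mk_one_le_of_ne_mk_zero hn hj)
    linarith
  · have hPj := hanti (Fin.mk_zero_lt_of_ne hn hj)
    have hPk := hanti (Fin.mk_zero_lt_of_ne hn hk)
    linarith
end
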